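/- Let R1 : K1 → K3 and R2 : K2 → K4 be closed relations between formal contexts, with intent relations R1* and R2* (where R*(m) := (R^•(m'))'). Define (R1 ⊗ R2)(g1,g2) := cl(R1(g1) × R2(g2)) ⊆ G3 × G4 (closure in K3 ⊗ K4) and S(m3,m4) := cl(R1*(m3) × R2*(m4)) ⊆ M1 × M2 (closure on the attribute side of K1 ⊗ K2). Then (R1 ⊗ R2, S) is a Chu correspondence K1 ⊗ K2 → K3 ⊗ K4; in particular R1 ⊗ R2 is a closed relation K1 ⊗ K2 → K3 ⊗ K4. -/

import Mathlib

open Set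

/-- A formal context `(G, M, I)`: a set of objects, a set of attributes,
and an incidence relation between them. -/
structure FormalContext where
  G : Type*
  M : Type*
  I : G → M → Prop

namespace FormalContext

variable (K : FormalContext)

/-- `A'` for a set of objects `A ⊆ G`. -/
def polarG (A : Set K.G) : Set K.M := upperPolar K.I A

/-- `B'` for a set of attributes `B ⊆ M`. -/
def polarM (B : Set K.M) : Set K.G := lowerPolar K.I B

/-- The closure `cl(A) = A''` of a set of objects. -/
def clG (A : Set K.G) : Set K.G := K.polarM (K.polarG A)

/-- The closure `cl(B) = B''` of a set of attributes. -/
def clM (B : Set K.M) : Set K.M := K.polarG (K.polarM B)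

/-- A set of objects is closed when it equals its closure. -/
def ClosedG (A : Set K.G) : Prop := K.clG A = A

/-- A set of attributes is closed when it equals its closure. -/
def ClosedM (B : Set K.M) : Prop := K.clM B = B

/-- The dual context `K* = (M, G, I†)`. -/
def dual : FormalContext := ⟨K.M, K.G, fun m g => K.I g m⟩

/-- The direct product `K1 ⊗ K2` of formal contexts (Ganter–Wille). -/
def dprod (K1 K2 : FormalContext) : FormalContext :=
  ⟨K1.G × K2.G, K1.M × K2.M, fun g m => K1.I g.1 m.1 ∨ K2.I g.2 m.2⟩

end FormalContext

/-- The trivial context `I = ({⋆},{⋆},≠)`. -/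
def trivCxt : FormalContext := ⟨PUnit, PUnit, fun a b => a ≠ b⟩

/-- The image `R(S)` of a set under a relation. -/
def relImage {X Y : Type*} (R : X → Y → Prop) (S : Set X) : Set Y :=
  {y | ∃ x ∈ S, R x y}

/-- `R^•(T) = {x | R(x) ⊆ T}`. -/
def relDot {X Y : Type*} (R : X → Y → Prop) (T : Set Y) : Set X :=
  {x | ∀ y, R x y → y ∈ T}

/-- `R_•(S) = {y | ∀ x ∈ S, R(x,y)}`. -/
def relLower {X Y : Type*} (R : X → Y → Prop) (S : Set X) : Set Y :=
  {y | ∀ x ∈ S, R x y}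

/-- A closed relation `K1 → K2`: each row `R(g)` is closed in `K2` and
`R^•` preserves closed sets. -/
structure IsClosedRel (K1 K2 : FormalContext) (R : K1.G → K2.G → Prop) : Prop where
  row_closed : ∀ g : K1.G, K2.ClosedG (relImage R {g})
  dot_closed : ∀ Y : Set K2.G, K2.ClosedG Y → K1.ClosedG (relDot R Y)

/-- Composition of closed relations: `(S ∘ R)(g) := cl(S(R(g)))`, closure in `K`. -/
def relComp {X Y : Type*} (K : FormalContext) (S : Y → K.G → Prop) (R : X → Y → Prop) :
    X → K.G → Prop :=
  fun g h => h ∈ K.clG (relImage S (relImage R {g}))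

/-- Composition on the attribute side: `(S ∘ R)(m) := cl(S(R(m)))`, closure on the
attribute side of `K`. -/
def relCompM {X Y : Type*} (K : FormalContext) (S : Y → K.M → Prop) (R : X → Y → Prop) :
    X → K.M → Prop :=
  fun m n => n ∈ K.clM (relImage S (relImage R {m}))

/-- The identity closed relation on `K`: `g ↦ cl({g})`. -/
def idClosedRel (K : FormalContext) : K.G → K.G → Prop := fun g h => h ∈ K.clG {g}

/-- A Chu correspondence `(R,S) : K1 → K2`. -/
structure IsChu (K1 K2 : FormalContext) (R : K1.G → K2.G → Prop) (S : K2.M → K1.M → Prop) :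
    Prop where
  extent_closed : ∀ g : K1.G, K2.ClosedG (relImage R {g})
  intent_closed : ∀ m : K2.M, K1.ClosedM (relImage S {m})
  adj : ∀ (g : K1.G) (m : K2.M),
    (∀ h ∈ relImage R {g}, K2.I h m) ↔ (∀ n ∈ relImage S {m}, K1.I g n)

/-- The intent relation `R*(m) := (R^•(m'))'` of a (closed) relation `R`. -/
def starRel (K1 K2 : FormalContext) (R : K1.G → K2.G → Prop) : K2.M → K1.M → Prop :=
  fun m n => n ∈ K1.polarG (relDot R (K2.polarM {m}))

/-- A bond from `K1` to `K2`: a relation `B ⊆ G1 × M2` with closed rows and columns. -/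
structure IsBond (K1 K2 : FormalContext) (B : K1.G → K2.M → Prop) : Prop where
  row_closed : ∀ g : K1.G, K2.ClosedM (relImage B {g})
  col_closed : ∀ m : K2.M, K1.ClosedG {g | B g m}

/-- The tensor `(R1 ⊗ R2)(g1,g2) := cl(R1(g1) × R2(g2))` of relations, closure in `K3 ⊗ K4`. -/
def tensorRelMor (K3 K4 : FormalContext) {X Y : Type*}
    (R1 : X → K3.G → Prop) (R2 : Y → K4.G → Prop) :
    X × Y → (K3.dprod K4).G → Prop :=
  fun p q => q ∈ (K3.dprod K4).clG (relImage R1 {p.1} ×ˢ relImage R2 {p.2})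

/-- The concept of `K` generated by a set of objects `A`: `(cl(A), A')`. -/
def conceptOfSet (K : FormalContext) (A : Set K.G) : Concept K.G K.M K.I where
  extent := K.clG A
  intent := K.polarG A
  upperPolar_extent := upperPolar_lowerPolar_upperPolar K.I A
  lowerPolar_intent := rfl

/-- The sup-lattice map `ℬ(R)` on concept lattices induced by a relation:
`(A,A') ↦ (cl(R(A)), R(A)')`. -/
def conceptMap (K1 K2 : FormalContext) (R : K1.G → K2.G → Prop) :
    Concept K1.G K1.M K1.I → Concept K2.G K2.M K2.I :=
  fun c => conceptOfSet K2 (relImage R c.extent)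

/-- The incidence relation of the context whose concept lattice is the concept tensor
`V1 ⊗ V2`: `(x,y) ∇ (w,z) iff x ≤ w or y ≤ z`. -/
def tensorRel (V1 V2 : Type*) [CompleteLattice V1] [CompleteLattice V2] :
    V1 × V2 → V1 × V2 → Prop :=
  fun p q => p.1 ≤ q.1 ∨ p.2 ≤ q.2

/-- The concept tensor `V1 ⊗ V2` of complete lattices (Wille's tensor product). -/
abbrev ConceptTensor (V1 V2 : Type*) [CompleteLattice V1] [CompleteLattice V2] :=
  Concept (V1 × V2) (V1 × V2) (tensorRel V1 V2)

/-- The tensorial operation `x ⊼ y`: the concept with extent `cl{(x,y)}` and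
intent `{(x,y)}'`. -/
def wedge {V1 V2 : Type*} [CompleteLattice V1] [CompleteLattice V2] (x : V1) (y : V2) :
    ConceptTensor V1 V2 where
  extent := lowerPolar (tensorRel V1 V2) (upperPolar (tensorRel V1 V2) {(x, y)})
  intent := upperPolar (tensorRel V1 V2) {(x, y)}
  upperPolar_extent := upperPolar_lowerPolar_upperPolar _ _
  lowerPolar_intent := rfl

/-- Two subsets of a complete lattice are mutually distributive: all families indexed
by a set `ι` satisfy the two distributivity laws. -/
def MutuallyDistrib {M : Type u} [CompleteLattice M] (X Y : Set M) : Prop :=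
  ∀ (ι : Type u) (x y : ι → M), (∀ i, x i ∈ X) → (∀ i, y i ∈ Y) →
    ((⨆ i, x i ⊓ y i) = ⨅ J : Set ι, ((⨆ j ∈ J, x j) ⊔ ⨆ k ∈ Jᶜ, y k)) ∧
    ((⨅ i, x i ⊔ y i) = ⨆ J : Set ι, ((⨅ j ∈ J, x j) ⊓ ⨅ k ∈ Jᶜ, y k))
section Statement11Aux

open FormalContext

lemma relImage_singleton' {X Y : Type*} (R : X → Y → Prop) (g : X) :
    relImage R {g} = {y | R g y} := by
  ext y; simp [relImage]

lemma polarG_clG' (K : FormalContext) (A : Set K.G) : K.polarG (K.clG A) = K.polarG A :=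
  upperPolar_lowerPolar_upperPolar K.I A

lemma polarM_clM' (K : FormalContext) (B : Set K.M) : K.polarM (K.clM B) = K.polarM B :=
  lowerPolar_upperPolar_lowerPolar K.I B

lemma closedG_polarM' (K : FormalContext) (B : Set K.M) : K.ClosedG (K.polarM B) :=
  lowerPolar_upperPolar_lowerPolar K.I B

lemma closedM_polarG' (K : FormalContext) (A : Set K.G) : K.ClosedM (K.polarG A) :=
  upperPolar_lowerPolar_upperPolar K.I A

lemma closedG_clG' (K : FormalContext) (A : Set K.G) : K.ClosedG (K.clG A) :=
  closedG_polarM' K _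

lemma closedM_clM' (K : FormalContext) (B : Set K.M) : K.ClosedM (K.clM B) :=
  closedM_polarG' K _

lemma forall_clG' {K : FormalContext} (A : Set K.G) (m : K.M) :
    (∀ h ∈ K.clG A, K.I h m) ↔ (∀ h ∈ A, K.I h m) := by
  have h := Set.ext_iff.mp (polarG_clG' K A) m
  exact ⟨fun hh a ha => (h.mp fun x hx => hh x hx) ha,
         fun hh a ha => (h.mpr fun x hx => hh x hx) ha⟩

lemma forall_clM' {K : FormalContext} (B : Set K.M) (g : K.G) :
    (∀ n ∈ K.clM B, K.I g n) ↔ (∀ n ∈ B, K.I g n) := by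
  have h := Set.ext_iff.mp (polarM_clM' K B) g
  exact ⟨fun hh a ha => (h.mp fun x hx => hh x hx) ha,
         fun hh a ha => (h.mpr fun x hx => hh x hx) ha⟩

lemma forall_prod_or' {A B : Type*} (P : A → Prop) (Q : B → Prop) (SA : Set A) (SB : Set B) :
    (∀ a ∈ SA, ∀ b ∈ SB, P a ∨ Q b) ↔ (∀ a ∈ SA, P a) ∨ (∀ b ∈ SB, Q b) := by
  constructor
  · intro h
    by_cases hA : ∀ a ∈ SA, P a
    · exact Or.inl hA
    · right
      push_neg at hA
      obtain ⟨a, ha, hpa⟩ := hA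
      intro b hb
      exact (h a ha b hb).resolve_left hpa
  · rintro (h | h) a ha b hb
    · exact Or.inl (h a ha)
    · exact Or.inr (h b hb)

/-- The Chu adjunction for a closed relation and its intent relation. -/
lemma closedRel_adj' {K1 K2 : FormalContext} {R : K1.G → K2.G → Prop}
    (h : IsClosedRel K1 K2 R) (g : K1.G) (m : K2.M) :
    (∀ y, R g y → K2.I y m) ↔ (∀ n, starRel K1 K2 R m n → K1.I g n) := by
  have hD : K1.ClosedG (relDot R (K2.polarM {m})) :=
    h.dot_closed _ (closedG_polarM' K2 {m})
  constructor
  · intro hP n hn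
    refine hn ?_
    intro y hy b hb
    rw [Set.mem_singleton_iff] at hb
    subst hb
    exact hP y hy
  · intro hQ y hy
    have hg : g ∈ relDot R (K2.polarM {m}) := by
      rw [← hD]
      intro n hn
      exact hQ n hn
    exact hg y hy rfl

/-- Any Chu correspondence gives `dot_closed`. -/
lemma chu_dot' {K1 K2 : FormalContext} {R : K1.G → K2.G → Prop} {S : K2.M → K1.M → Prop}
    (hc : IsChu K1 K2 R S) {Y : Set K2.G} (hY : K2.ClosedG Y) :
    K1.ClosedG (relDot R Y) := by
  have key : relDot R Y = K1.polarM (⋃ m ∈ K2.polarG Y, relImage S {m}) := by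
    ext p
    constructor
    · intro hp n hn
      rw [Set.mem_iUnion₂] at hn
      obtain ⟨m, hm, hnm⟩ := hn
      refine (hc.adj p m).mp ?_ n hnm
      rintro h ⟨x, (rfl : x = p), hxh⟩
      exact hm (hp h hxh)
    · intro hp y hy
      rw [← hY]
      intro m hm
      have hS : ∀ n ∈ relImage S {m}, K1.I p n := fun n hn =>
        hp (Set.mem_iUnion₂.mpr ⟨m, hm, hn⟩)
      exact (hc.adj p m).mpr hS y ⟨p, rfl, hy⟩
  rw [key]
  exact closedG_polarM' K1 _

end Statement11Aux

/-- For closed relations `R1 : K1 → K3`, `R2 : K2 → K4`, the pair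
`(R1 ⊗ R2, S)` with `S(m3,m4) := cl(R1*(m3) × R2*(m4))` is a Chu correspondence
`K1 ⊗ K2 → K3 ⊗ K4`; in particular `R1 ⊗ R2` is a closed relation. -/
theorem tensorRelMor_isChu (K1 K2 K3 K4 : FormalContext)
    (R1 : K1.G → K3.G → Prop) (R2 : K2.G → K4.G → Prop)
    (h1 : IsClosedRel K1 K3 R1) (h2 : IsClosedRel K2 K4 R2) :
    IsChu (K1.dprod K2) (K3.dprod K4) (tensorRelMor K3 K4 R1 R2)
      (fun m n => n ∈ (K1.dprod K2).clM
        (relImage (starRel K1 K3 R1) {m.1} ×ˢ relImage (starRel K2 K4 R2) {m.2})) ∧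
    IsClosedRel (K1.dprod K2) (K3.dprod K4) (tensorRelMor K3 K4 R1 R2) := by
  set T := tensorRelMor K3 K4 R1 R2 with hT
  set S' := (fun (m : (K3.dprod K4).M) (n : (K1.dprod K2).M) => n ∈ (K1.dprod K2).clM
        (relImage (starRel K1 K3 R1) {m.1} ×ˢ relImage (starRel K2 K4 R2) {m.2})) with hS'
  have hrowT : ∀ g, relImage T {g} =
      (K3.dprod K4).clG (relImage R1 {g.1} ×ˢ relImage R2 {g.2}) := by
    intro g
    rw [relImage_singleton']
    rfl
  have hrowS : ∀ m, relImage S' {m} =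
      (K1.dprod K2).clM (relImage (starRel K1 K3 R1) {m.1} ×ˢ relImage (starRel K2 K4 R2) {m.2}) := by
    intro m
    rw [relImage_singleton']
    rfl
  have chu : IsChu (K1.dprod K2) (K3.dprod K4) T S' := by
    refine ⟨?_, ?_, ?_⟩
    · intro g
      erw [hrowT]
      exact closedG_clG' _ _
    · intro m
      rw [hrowS]
      exact closedM_clM' _ _
    · intro (g : K1.G × K2.G) m
      erw [hrowT, hrowS]
      erw [forall_clG', forall_clM']
      have lhs : (∀ h ∈ relImage R1 {g.1} ×ˢ relImage R2 {g.2}, (K3.dprod K4).I h m) ↔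
          ((∀ a ∈ relImage R1 {g.1}, K3.I a m.1) ∨ (∀ b ∈ relImage R2 {g.2}, K4.I b m.2)) := by
        rw [← forall_prod_or']
        constructor
        · intro h a ha b hb
          exact h (a, b) ⟨ha, hb⟩
        · intro h p hp
          exact h p.1 hp.1 p.2 hp.2
      have rhs : (∀ n ∈ relImage (starRel K1 K3 R1) {m.1} ×ˢ relImage (starRel K2 K4 R2) {m.2},
            (K1.dprod K2).I g n) ↔
          ((∀ a ∈ relImage (starRel K1 K3 R1) {m.1}, K1.I g.1 a) ∨
           (∀ b ∈ relImage (starRel K2 K4 R2) {m.2}, K2.I g.2 b)) := by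
        rw [← forall_prod_or']
        constructor
        · intro h a ha b hb
          exact h (a, b) ⟨ha, hb⟩
        · intro h p hp
          exact h p.1 hp.1 p.2 hp.2
      have e1 : (∀ a ∈ relImage R1 {g.1}, K3.I a m.1) ↔
          (∀ n ∈ relImage (starRel K1 K3 R1) {m.1}, K1.I g.1 n) := by
        simp only [relImage_singleton', Set.mem_setOf_eq]
        exact closedRel_adj' h1 g.1 m.1
      have e2 : (∀ a ∈ relImage R2 {g.2}, K4.I a m.2) ↔
          (∀ n ∈ relImage (starRel K2 K4 R2) {m.2}, K2.I g.2 n) := by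
        simp only [relImage_singleton', Set.mem_setOf_eq]
        exact closedRel_adj' h2 g.2 m.2
      exact lhs.trans ((or_congr e1 e2).trans rhs.symm)
  exact ⟨chu, ⟨chu.extent_closed, fun Y hY => chu_dot' chu hY⟩⟩
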